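/- arXiv:1410.2388 — 2 statements merged into one kernel-verified Lean document; each statement's English description precedes it below -/
import Mathlib

section
/- For integers m, n ≥ 2, the maximum length (number of vertices) of a cycle in the rectangular grid graph R(m,n) is m·n when m·n is even, and m·n − 1 when m·n is odd. -/
/-- Adjacency in the infinite 2D integer grid graph `G∞`:
two lattice points are adjacent iff they are at (Euclidean) distance 1. -/
def GridAdj (u v : ℤ × ℤ) : Prop :=
  (u.1 - v.1).natAbs + (u.2 - v.2).natAbs = 1

/-- The infinite grid graph `G∞` as a simple graph on `ℤ × ℤ`. -/
def GridGraph : SimpleGraph (ℤ × ℤ) where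
  Adj u v := GridAdj u v
  symm := ⟨by intro u v h; simp only [GridAdj] at *; omega⟩
  loopless := ⟨by intro u h; simp only [GridAdj] at h; omega⟩

/-- A grid graph with vertex set `V` is solid if the subgraph of `G∞`
induced by the complement of `V` is connected. -/
def Solid (V : Set (ℤ × ℤ)) : Prop :=
  (GridGraph.induce Vᶜ).Connected

/-- Vertex set of the rectangular grid graph `R(m,n)`. -/
def RectV (m n : ℤ) : Set (ℤ × ℤ) :=
  {v | 1 ≤ v.1 ∧ v.1 ≤ m ∧ 1 ≤ v.2 ∧ v.2 ≤ n}

/-- `l` is a path from `s` to `t` in the grid graph induced by the vertex set `V`,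
recorded as the list of its vertices. -/
def IsGridPath (V : Set (ℤ × ℤ)) (l : List (ℤ × ℤ)) (s t : ℤ × ℤ) : Prop :=
  l ≠ [] ∧ (∀ v ∈ l, v ∈ V) ∧ l.Nodup ∧ l.Chain' GridAdj ∧
    l.head? = some s ∧ l.getLast? = some t

/-- `l` is a cycle in the grid graph induced by the vertex set `V`, recorded as the
list of its (distinct) vertices; consecutive vertices, and the last and first
vertices, are adjacent.  Its length (number of vertices) is `l.length`. -/
def IsGridCycle (V : Set (ℤ × ℤ)) (l : List (ℤ × ℤ)) : Prop :=
  3 ≤ l.length ∧ (∀ v ∈ l, v ∈ V) ∧ l.Nodup ∧ (l ++ l.take 1).Chain' GridAdj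

/-- The sequence of unit steps of a path (as a list of vertices). -/
def pathSteps (l : List (ℤ × ℤ)) : List (ℤ × ℤ) :=
  (l.zip l.tail).map fun p => p.2 - p.1

/-- A path is monotone if it contains no two steps in opposite directions. -/
def MonotonePath (l : List (ℤ × ℤ)) : Prop :=
  ∀ d₁ ∈ pathSteps l, ∀ d₂ ∈ pathSteps l, d₁ ≠ -d₂

/-- The first and the last step of the (sub)path `c` point in opposite directions. -/
def OppEnds (c : List (ℤ × ℤ)) : Prop :=
  3 ≤ c.length ∧
    c.getD 1 (0, 0) - c.getD 0 (0, 0) =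
      c.getD (c.length - 2) (0, 0) - c.getD (c.length - 1) (0, 0)

/-- A cave: a (contiguous) subpath whose first and last steps point in opposite
directions, which is minimal with this property. -/
def IsCave (c : List (ℤ × ℤ)) : Prop :=
  OppEnds c ∧ ∀ c', c' <:+: c → c'.length < c.length → ¬ OppEnds c'

/-- The first endpoint `p` of a cave. -/
def caveStart (c : List (ℤ × ℤ)) : ℤ × ℤ := c.getD 0 (0, 0)

/-- The second endpoint `q` of a cave. -/
def caveEnd (c : List (ℤ × ℤ)) : ℤ × ℤ := c.getD (c.length - 1) (0, 0)

/-- `v` is a lattice point strictly between `p` and `q` on the straight axis-parallel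
segment from `p` to `q` (the "vertices inside" a cave with endpoints `p`, `q`). -/
def Between (p q v : ℤ × ℤ) : Prop :=
  (p.1 = q.1 ∧ v.1 = p.1 ∧ min p.2 q.2 < v.2 ∧ v.2 < max p.2 q.2) ∨
  (p.2 = q.2 ∧ v.2 = p.2 ∧ min p.1 q.1 < v.1 ∧ v.1 < max p.1 q.1)

/-- `v` is a lattice point on the closed straight segment from `p` to `q`. -/
def OnSeg (p q v : ℤ × ℤ) : Prop := v = p ∨ v = q ∨ Between p q v

/-- The (directed) edges of a cycle given by its vertex list `l`,
including the closing edge from the last vertex back to the first. -/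
def cycEdges (l : List (ℤ × ℤ)) : List ((ℤ × ℤ) × (ℤ × ℤ)) :=
  (l ++ l.take 1).zip (l ++ l.take 1).tail

/-- The (undirected) edge `{a, b}` occurs on the cycle `l`. -/
def CycEdgeMem (l : List (ℤ × ℤ)) (a b : ℤ × ℤ) : Prop :=
  (a, b) ∈ cycEdges l ∨ (b, a) ∈ cycEdges l

/-- The (directed) edges of a path given by its vertex list `l`. -/
def pathEdges (l : List (ℤ × ℤ)) : List ((ℤ × ℤ) × (ℤ × ℤ)) := l.zip l.tail

/-- The (undirected) edge `{a, b}` occurs on the path `l`. -/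
def PathEdgeMem (l : List (ℤ × ℤ)) (a b : ℤ × ℤ) : Prop :=
  (a, b) ∈ pathEdges l ∨ (b, a) ∈ pathEdges l

/-- Number of vertical edges of the cycle `l` crossed by the rightward horizontal ray
starting at the point `(a, b + 1/2)`: vertical edges joining `(x,b)` and `(x,b+1)`
with `x > a`.  Used for the even–odd ("inside") test. -/
def vertCross (l : List (ℤ × ℤ)) (a b : ℤ) : ℕ :=
  (cycEdges l).countP fun e =>
    decide (e.1.1 = e.2.1 ∧ a < e.1.1 ∧
      ((e.1.2 = b ∧ e.2.2 = b + 1) ∨ (e.1.2 = b + 1 ∧ e.2.2 = b)))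

/-- Number of horizontal edges of the cycle `l` crossed by the upward vertical ray
starting at the point `(a + 1/2, b)`: horizontal edges joining `(a,y)` and `(a+1,y)`
with `y > b`. -/
def horizCross (l : List (ℤ × ℤ)) (a b : ℤ) : ℕ :=
  (cycEdges l).countP fun e =>
    decide (e.1.2 = e.2.2 ∧ b < e.1.2 ∧
      ((e.1.1 = a ∧ e.2.1 = a + 1) ∨ (e.1.1 = a + 1 ∧ e.2.1 = a)))

/-- The lattice point `v` lies in the closed bounded region determined by the cycle `l`
(regarded as a simple closed curve): either on the curve, or inside it by the
even–odd rule. -/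
def InClosedRegion (l : List (ℤ × ℤ)) (v : ℤ × ℤ) : Prop :=
  v ∈ l ∨ Odd (vertCross l v.1 v.2)

/-- The unit grid edge `{u, v}` lies in the closed bounded region determined by the
cycle `l`: either it is an edge of the cycle, or its midpoint is inside the cycle by
the even–odd rule. -/
def EdgeInClosedRegion (l : List (ℤ × ℤ)) (u v : ℤ × ℤ) : Prop :=
  CycEdgeMem l u v ∨
    (u.1 = v.1 ∧ Odd (vertCross l u.1 (min u.2 v.2))) ∨
    (u.2 = v.2 ∧ Odd (horizCross l (min u.1 v.1) u.2))

/-- The cave `c` of the cycle `l` is convex: the vertices and edges inside it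
(i.e. on the straight segment between its endpoints) lie in the closed bounded
region determined by `l`. -/
def ConvexCave (l c : List (ℤ × ℤ)) : Prop :=
  (∀ v, Between (caveStart c) (caveEnd c) v → InClosedRegion l v) ∧
  (∀ u v, OnSeg (caveStart c) (caveEnd c) u → OnSeg (caveStart c) (caveEnd c) v →
    GridAdj u v → EdgeInClosedRegion l u v)

/-- `c` is a cave of the cycle `l`: a cave that occurs as a contiguous subpath of the
cyclic vertex sequence of `l` (i.e. as a prefix of some rotation of `l`). -/
def CaveOfCycle (l c : List (ℤ × ℤ)) : Prop :=
  IsCave c ∧ ∃ i, c <+: l.rotate i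

/-- The cave `c` is contractible with respect to the path/cycle `l`:
no vertex inside the cave belongs to `l`. -/
def ContractibleCaveOf (l c : List (ℤ × ℤ)) : Prop :=
  ∀ v, Between (caveStart c) (caveEnd c) v → v ∉ l

/-- The straight axis-parallel segment from `p` to `q`, as the list of its lattice
points from `p` to `q` (the shortest path between `p` and `q` on their common line). -/
def segList (p q : ℤ × ℤ) : List (ℤ × ℤ) :=
  if p.1 = q.1 then
    (List.range ((q.2 - p.2).natAbs + 1)).map fun i =>
      (p.1, p.2 + (if p.2 ≤ q.2 then (i : ℤ) else -(i : ℤ)))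
  else
    (List.range ((q.1 - p.1).natAbs + 1)).map fun i =>
      (p.1 + (if p.1 ≤ q.1 then (i : ℤ) else -(i : ℤ)), p.2)

/-- Adjacency in the infinite 3D integer grid: distance 1. -/
def Grid3Adj (u v : ℤ × ℤ × ℤ) : Prop :=
  (u.1 - v.1).natAbs + (u.2.1 - v.2.1).natAbs + (u.2.2 - v.2.2).natAbs = 1

/-- Vertex set of the 3D grid graph `R(m,n,o)`. -/
def Rect3V (m n o : ℤ) : Set (ℤ × ℤ × ℤ) :=
  {v | 1 ≤ v.1 ∧ v.1 ≤ m ∧ 1 ≤ v.2.1 ∧ v.2.1 ≤ n ∧ 1 ≤ v.2.2 ∧ v.2.2 ≤ o}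

/-- `l` is a path from `s` to `t` in the 3D grid graph induced by `V`. -/
def IsGrid3Path (V : Set (ℤ × ℤ × ℤ)) (l : List (ℤ × ℤ × ℤ)) (s t : ℤ × ℤ × ℤ) : Prop :=
  l ≠ [] ∧ (∀ v ∈ l, v ∈ V) ∧ l.Nodup ∧ l.Chain' Grid3Adj ∧
    l.head? = some s ∧ l.getLast? = some t

/-- `l` is a cycle in the 3D grid graph induced by `V`. -/
def IsGrid3Cycle (V : Set (ℤ × ℤ × ℤ)) (l : List (ℤ × ℤ × ℤ)) : Prop :=
  3 ≤ l.length ∧ (∀ v ∈ l, v ∈ V) ∧ l.Nodup ∧ (l ++ l.take 1).Chain' Grid3Adj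

/-- The folding map `F` from the 3D grid `R(m,n,o)` to the rectangular grid `R(m,no)`:
`F(v) = (x(v), n(z(v)-1) + y(v))` if `z(v)` is odd, and
`F(v) = (x(v), n·z(v) - y(v) + 1)` if `z(v)` is even. -/
def foldMap (n : ℤ) (v : ℤ × ℤ × ℤ) : ℤ × ℤ :=
  if Odd v.2.2 then (v.1, n * (v.2.2 - 1) + v.2.1) else (v.1, n * v.2.2 - v.2.1 + 1)

/-!
Colour a lattice point `(x, y)` by the parity of `x + y`. Every grid edge joins the two colour
classes, so every grid cycle has even length; since it also has at most `m n` vertices, its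
length is at most `m n`, and at most `m n - 1` when `m n` is odd.

Conversely, when `n` is even, the first column followed by a boustrophedon sweep of the other
`m - 1` columns, row by row from the top, is a Hamiltonian path from `(1, 1)` to `(2, 1)`, which
closes up to a cycle; the case of even `m` is its transpose. When `m` and `n` are both odd, the
top two rows of columns `2, …, m` are swept column by column instead, and the resulting cycle
misses only the corner `(1, n)`.
-/

namespace IsGridPath

variable {V W : Set (ℤ × ℤ)} {l l₁ l₂ : List (ℤ × ℤ)} {s t s' t' : ℤ × ℤ}

theorem mono (h : IsGridPath V l s t) (hVW : V ⊆ W) : IsGridPath W l s t :=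
  let ⟨hne, hmem, hrest⟩ := h
  ⟨hne, fun v hv => hVW (hmem v hv), hrest⟩

theorem map {φ : ℤ × ℤ → ℤ × ℤ} (h : IsGridPath V l s t) (hφ : Function.Injective φ)
    (hadj : ∀ u v, GridAdj u v → GridAdj (φ u) (φ v)) (hVW : Set.MapsTo φ V W) :
    IsGridPath W (l.map φ) (φ s) (φ t) := by
  obtain ⟨hne, hmem, hnd, hch, hs, ht⟩ := h
  refine ⟨by simpa using hne, ?_, hnd.map hφ, ?_, by simp [hs], by simp [ht]⟩
  · simp only [List.mem_map, forall_exists_index, and_imp]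
    rintro _ v hv rfl
    exact hVW (hmem v hv)
  · exact (List.isChain_map φ).2 (hch.imp hadj)

theorem append (h₁ : IsGridPath V l₁ s t) (h₂ : IsGridPath W l₂ s' t') (hadj : GridAdj t s')
    (hVW : Disjoint V W) : IsGridPath (V ∪ W) (l₁ ++ l₂) s t' := by
  obtain ⟨hne₁, hmem₁, hnd₁, hch₁, hs₁, ht₁⟩ := h₁
  obtain ⟨hne₂, hmem₂, hnd₂, hch₂, hs₂, ht₂⟩ := h₂
  refine ⟨by simp [hne₁], ?_, ?_, ?_, by simp [List.head?_append, hs₁], by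
    simp [List.getLast?_append, ht₂]⟩
  · simp only [List.mem_append]
    rintro v (hv | hv)
    exacts [Or.inl (hmem₁ v hv), Or.inr (hmem₂ v hv)]
  · refine List.nodup_append.2 ⟨hnd₁, hnd₂, ?_⟩
    rintro v hv₁ _ hv₂ rfl
    exact Set.disjoint_left.1 hVW (hmem₁ v hv₁) (hmem₂ v hv₂)
  · refine List.isChain_append.2 ⟨hch₁, hch₂, ?_⟩
    simp [ht₁, hs₂, hadj]

theorem isGridCycle (h : IsGridPath V l s t) (hclose : GridAdj t s) (hl : 3 ≤ l.length) :
    IsGridCycle V l := by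
  obtain ⟨hne, hmem, hnd, hch, hs, ht⟩ := h
  refine ⟨hl, hmem, hnd, ?_⟩
  have htake : l.take 1 = [s] := by
    obtain ⟨a, l', rfl⟩ := List.exists_cons_of_ne_nil hne
    simp_all
  rw [htake]
  refine List.isChain_append.2 ⟨hch, List.isChain_singleton s, ?_⟩
  simp [ht, hclose]

end IsGridPath

theorem isGridPath_range_map {V : Set (ℤ × ℤ)} {f : ℕ → ℤ × ℤ} {L : ℕ} (hL : 0 < L)
    (hmem : ∀ i < L, f i ∈ V) (hinj : ∀ i < L, ∀ j < L, f i = f j → i = j)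
    (hadj : ∀ i, i + 1 < L → GridAdj (f i) (f (i + 1))) :
    IsGridPath V ((List.range L).map f) (f 0) (f (L - 1)) := by
  refine ⟨by simp; omega, ?_, ?_, ?_, ?_, ?_⟩
  · simp only [List.mem_map, List.mem_range, forall_exists_index, and_imp]
    rintro _ i hi rfl
    exact hmem i hi
  · exact List.Nodup.map_on (fun i hi j hj => hinj i (List.mem_range.1 hi) j (List.mem_range.1 hj))
      List.nodup_range
  · refine List.isChain_iff_getElem.2 fun i hi => ?_
    simp only [List.length_map, List.length_range] at hi
    simpa using hadj i (by omega)
  · simp [List.head?_range, show L ≠ 0 by omega]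
  · simp [List.getLast?_range, show L ≠ 0 by omega]

def boustrophedonRow (L k i : ℕ) : ℤ × ℤ :=
  (if Even k then (i : ℤ) else L - 1 - i, k)

def boustrophedon (L : ℕ) : ℕ → List (ℤ × ℤ)
  | 0 => []
  | k + 1 => boustrophedon L k ++ (List.range L).map (boustrophedonRow L k)

theorem length_boustrophedon (L k : ℕ) : (boustrophedon L k).length = L * k := by
  induction k with
  | zero => rfl
  | succ k ih => simp [boustrophedon, ih, Nat.mul_succ]

theorem isGridPath_boustrophedonRow {L : ℕ} (hL : 0 < L) (k : ℕ) :
    IsGridPath (Set.Icc (0, (k : ℤ)) ((L : ℤ) - 1, k)) ((List.range L).map (boustrophedonRow L k))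
      (if Even k then 0 else (L : ℤ) - 1, k) (if Even k then (L : ℤ) - 1 else 0, k) := by
  have h := isGridPath_range_map (V := Set.Icc (0, (k : ℤ)) ((L : ℤ) - 1, k))
    (f := boustrophedonRow L k) hL ?_ ?_ ?_
  · convert h using 1 <;> simp only [boustrophedonRow] <;> split_ifs <;> simp <;> omega
  all_goals simp only [boustrophedonRow, Set.mem_Icc, Prod.mk_le_mk, GridAdj, Prod.mk.injEq]
  · intro i hi; split_ifs <;> omega
  · intro i hi j hj; split_ifs <;> omega
  · intro i hi; split_ifs <;> omega

theorem isGridPath_boustrophedon {L k : ℕ} (hL : 0 < L) (hk : 0 < k) :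
    IsGridPath (Set.Icc (0, 0) ((L : ℤ) - 1, (k : ℤ) - 1)) (boustrophedon L k) (0, 0)
      (if Even k then 0 else (L : ℤ) - 1, (k : ℤ) - 1) := by
  induction k, hk using Nat.le_induction with
  | base => simpa [boustrophedon] using isGridPath_boustrophedonRow hL 0
  | succ k hk ih =>
    have h := (IsGridPath.append ih (isGridPath_boustrophedonRow hL k) ?_ ?_).mono
      (W := Set.Icc (0, 0) ((L : ℤ) - 1, ((k + 1 : ℕ) : ℤ) - 1)) ?_
    · convert h using 2
      · simp [boustrophedon]
      · simp only [Nat.even_add_one]; split_ifs <;> simp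
      · push_cast; ring
    · simp only [GridAdj]; split_ifs <;> omega
    · simp only [Set.disjoint_left, Set.mem_Icc, Prod.le_def]; omega
    · intro v; simp only [Set.mem_union, Set.mem_Icc, Prod.le_def]; push_cast; omega

theorem exists_isGridPath_rectV_of_even {M N : ℕ} (hM : 2 ≤ M) (hN : 2 ≤ N) (he : Even N) :
    ∃ l, IsGridPath (RectV M N) l (1, 1) (2, 1) ∧ l.length = M * N := by
  have hspine := (isGridPath_boustrophedon (L := N) (k := 1) (by omega) one_pos).map
    (φ := fun v => (1 + v.2, 1 + v.1)) (W := Set.Icc (1, 1) (1, N))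
    (fun u v h => by simp only [Prod.mk.injEq] at h; exact Prod.ext (by omega) (by omega))
    (fun u v h => by simp only [GridAdj] at *; omega)
    (fun v hv => by simp only [Set.mem_Icc, Prod.le_def] at *; omega)
  have hsnake := (isGridPath_boustrophedon (L := M - 1) (k := N) (by omega) (by omega)).map
    (φ := fun v => (2 + v.1, N - v.2)) (W := Set.Icc (2, 1) (M, N))
    (fun u v h => by simp only [Prod.mk.injEq] at h; exact Prod.ext (by omega) (by omega))
    (fun u v h => by simp only [GridAdj] at *; omega)
    (fun v hv => by simp only [Set.mem_Icc, Prod.le_def] at *; push_cast at *; omega)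
  simp only [he, Nat.not_even_one, if_true, if_false] at hspine hsnake
  have hpath := (hspine.append hsnake (by simp [GridAdj]) ?_).mono (W := RectV M N) ?_
  · refine ⟨_, by simpa using hpath, ?_⟩
    simp only [List.length_append, List.length_map, length_boustrophedon]
    zify [(by omega : 1 ≤ M)]
    ring
  · simp only [Set.disjoint_left, Set.mem_Icc, Prod.le_def]; omega
  · intro v; simp only [Set.mem_union, Set.mem_Icc, Prod.le_def, RectV, Set.mem_ofPred_eq]; omega

theorem exists_isGridPath_rectV_of_odd {M N : ℕ} (hM : 2 ≤ M) (hN : 2 ≤ N) (hMo : Odd M)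
    (hNo : Odd N) : ∃ l, IsGridPath (RectV M N) l (1, 1) (2, 1) ∧ l.length = M * N - 1 := by
  have hN3 : 3 ≤ N := by obtain ⟨k, rfl⟩ := hNo; omega
  have hMe : Even (M - 1) := by obtain ⟨k, rfl⟩ := hMo; exact ⟨k, by omega⟩
  have hNo' : ¬ Even (N - 2) := by
    obtain ⟨k, rfl⟩ := hNo; rw [Nat.not_even_iff_odd]; exact ⟨k - 1, by omega⟩
  have hspine := (isGridPath_boustrophedon (L := N - 1) (k := 1) (by omega) one_pos).map
    (φ := fun v => (1 + v.2, 1 + v.1)) (W := Set.Icc (1, 1) (1, N - 1))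
    (fun u v h => by simp only [Prod.mk.injEq] at h; exact Prod.ext (by omega) (by omega))
    (fun u v h => by simp only [GridAdj] at *; omega)
    (fun v hv => by simp only [Set.mem_Icc, Prod.le_def] at *; push_cast at *; omega)
  have hzigzag := (isGridPath_boustrophedon (L := 2) (k := M - 1) (by omega) (by omega)).map
    (φ := fun v => (2 + v.2, N - 1 + v.1)) (W := Set.Icc (2, N - 1) (M, N))
    (fun u v h => by simp only [Prod.mk.injEq] at h; exact Prod.ext (by omega) (by omega))
    (fun u v h => by simp only [GridAdj] at *; omega)
    (fun v hv => by simp only [Set.mem_Icc, Prod.le_def] at *; push_cast at *; omega)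
  have hsnake := (isGridPath_boustrophedon (L := M - 1) (k := N - 2) (by omega) (by omega)).map
    (φ := fun v => (M - v.1, N - 2 - v.2)) (W := Set.Icc (2, 1) (M, N - 2))
    (fun u v h => by simp only [Prod.mk.injEq] at h; exact Prod.ext (by omega) (by omega))
    (fun u v h => by simp only [GridAdj] at *; omega)
    (fun v hv => by simp only [Set.mem_Icc, Prod.le_def] at *; push_cast at *; omega)
  simp only [hMe, hNo', Nat.not_even_one, if_true, if_false] at hspine hzigzag hsnake
  have hpath := ((hspine.append hzigzag ?_ ?_).append hsnake ?_ ?_).mono (W := RectV M N) ?_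
  · refine ⟨_, by convert hpath using 2 <;> (try simp) <;> omega, ?_⟩
    simp only [List.length_append, List.length_map, length_boustrophedon]
    zify [(by omega : 1 ≤ M), (by omega : 1 ≤ N), (by omega : 2 ≤ N), (by nlinarith : 1 ≤ M * N)]
    ring
  · simp [GridAdj]; omega
  · simp only [Set.disjoint_left, Set.mem_Icc, Prod.le_def]; omega
  · simp [GridAdj]; omega
  · simp only [Set.disjoint_left, Set.mem_union, Set.mem_Icc, Prod.le_def]; omega
  · intro v; simp only [Set.mem_union, Set.mem_Icc, Prod.le_def, RectV, Set.mem_ofPred_eq]; omega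

theorem even_add_length_of_isChain_gridAdj {a b : ℤ × ℤ} {l : List (ℤ × ℤ)}
    (hch : (a :: l).IsChain GridAdj) (hb : (a :: l).getLast? = some b) :
    Even (a.1 + a.2 + b.1 + b.2 + l.length) := by
  induction l generalizing a with
  | nil =>
    obtain rfl : a = b := by simpa using hb
    exact ⟨a.1 + a.2, by simp; ring⟩
  | cons c l ih =>
    rw [List.isChain_cons_cons] at hch
    have h := ih hch.2 (by simpa [List.getLast?_cons_cons] using hb)
    have hadj := hch.1
    simp only [GridAdj] at hadj
    simp only [Int.even_iff, List.length_cons] at h ⊢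
    push_cast
    omega

theorem IsGridCycle.even_length {V : Set (ℤ × ℤ)} {l : List (ℤ × ℤ)} (h : IsGridCycle V l) :
    Even l.length := by
  obtain ⟨h3, -, -, hch⟩ := h
  obtain ⟨a, t, rfl⟩ := List.exists_cons_of_length_pos (by omega : 0 < l.length)
  have hch' : (a :: (t ++ [a])).IsChain GridAdj := hch
  have := even_add_length_of_isChain_gridAdj hch' (List.getLast?_concat (l := a :: t))
  rw [List.length_cons]
  simp only [List.length_append, List.length_singleton, Int.even_iff, Nat.even_iff] at this ⊢
  push_cast at this
  omega

theorem IsGridCycle.length_le {m n : ℤ} {l : List (ℤ × ℤ)} (h : IsGridCycle (RectV m n) l)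
    (hm : 0 ≤ m) (hn : 0 ≤ n) : (l.length : ℤ) ≤ m * n := by
  obtain ⟨-, hmem, hnd, -⟩ := h
  have hsub : l.toFinset ⊆ Finset.Icc 1 m ×ˢ Finset.Icc 1 n := by
    intro v hv
    obtain ⟨h1, h2, h3, h4⟩ := hmem v (List.mem_toFinset.1 hv)
    simp [h1, h2, h3, h4]
  have hcard := Finset.card_le_card hsub
  rw [List.toFinset_card_of_nodup hnd, Finset.card_product, Int.card_Icc, Int.card_Icc,
    add_sub_cancel_right, add_sub_cancel_right] at hcard
  calc (l.length : ℤ) ≤ (m.toNat * n.toNat : ℕ) := by exact_mod_cast hcard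
    _ = m * n := by push_cast; rw [Int.toNat_of_nonneg hm, Int.toNat_of_nonneg hn]

theorem exists_isGridCycle_rectV_of_even {M N : ℕ} (hM : 2 ≤ M) (hN : 2 ≤ N)
    (he : Even (M * N)) : ∃ l, IsGridCycle (RectV M N) l ∧ l.length = M * N := by
  have h4 : 4 ≤ M * N := Nat.mul_le_mul hM hN
  rcases Nat.even_mul.1 he with hMe | hNe
  · obtain ⟨l, hl, hlen⟩ := exists_isGridPath_rectV_of_even hN hM hMe
    have hswap := hl.map Prod.swap_injective
      (fun u v h => by simp only [GridAdj, Prod.fst_swap, Prod.snd_swap] at *; omega)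
      (W := RectV M N) (fun v ⟨h₁, h₂, h₃, h₄⟩ => ⟨h₃, h₄, h₁, h₂⟩)
    have hlen' : (l.map Prod.swap).length = M * N := by rw [List.length_map, hlen, Nat.mul_comm]
    exact ⟨_, hswap.isGridCycle (by simp [GridAdj]) (by omega), hlen'⟩
  · obtain ⟨l, hl, hlen⟩ := exists_isGridPath_rectV_of_even hM hN hNe
    exact ⟨l, hl.isGridCycle (by simp [GridAdj]) (by omega), hlen⟩

theorem exists_isGridCycle_rectV_of_not_even {M N : ℕ} (hM : 2 ≤ M) (hN : 2 ≤ N)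
    (ho : ¬ Even (M * N)) : ∃ l, IsGridCycle (RectV M N) l ∧ l.length = M * N - 1 := by
  rw [Nat.even_mul, not_or, Nat.not_even_iff_odd, Nat.not_even_iff_odd] at ho
  obtain ⟨l, hl, hlen⟩ := exists_isGridPath_rectV_of_odd hM hN ho.1 ho.2
  have h4 : 4 ≤ M * N := Nat.mul_le_mul hM hN
  exact ⟨l, hl.isGridCycle (by simp [GridAdj]) (by omega), hlen⟩

/-- For integers `m, n ≥ 2`, the maximum number of vertices of a
cycle in the rectangular grid graph `R(m,n)` is `m·n` if `m·n` is even,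
and `m·n - 1` if `m·n` is odd. -/
theorem longest_cycle_in_rect (m n : ℤ) (hm : 2 ≤ m) (hn : 2 ≤ n) :
    IsGreatest {k : ℤ | ∃ l : List (ℤ × ℤ), IsGridCycle (RectV m n) l ∧ (l.length : ℤ) = k}
      (if Even (m * n) then m * n else m * n - 1) := by
  lift m to ℕ using (by omega)
  lift n to ℕ using (by omega)
  norm_cast at hm hn
  have h4 : 4 ≤ m * n := Nat.mul_le_mul hm hn
  simp only [← Nat.cast_mul, Int.even_coe_nat]
  refine ⟨?_, ?_⟩
  · split_ifs with he
    · obtain ⟨l, hl, hlen⟩ := exists_isGridCycle_rectV_of_even hm hn he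
      exact ⟨l, hl, by rw [hlen]⟩
    · obtain ⟨l, hl, hlen⟩ := exists_isGridCycle_rectV_of_not_even hm hn he
      exact ⟨l, hl, by omega⟩
  · rintro _ ⟨l, hl, rfl⟩
    have hle := hl.length_le (by positivity) (by positivity)
    have hev := hl.even_length
    split_ifs with he
    · exact_mod_cast hle
    · rw [Nat.even_iff] at hev he
      omega
end

section
/- Define F : ℤ³ → ℤ² by F(v) = (x(v), n·(z(v)−1) + y(v)) if z(v) is odd, and F(v) = (x(v), n·z(v) − y(v) + 1) if z(v) is even. Then F restricts to a bijection from the vertex set of the 3D grid graph R(m,n,o) onto the vertex set of the rectangular grid graph R(m, n·o), and whenever F(u) and F(v) are adjacent in R(m, n·o), the vertices u and v are adjacent in R(m,n,o). In particular, R(m,n,o) contains a spanning subgraph isomorphic to R(m, n·o). -/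
/-!
Within a layer `z` the map `F` traverses the column `y = 1, …, n` upwards if `z` is odd and
downwards if `z` is even, placing it in the block `n(z-1) + [1, n]` of the second coordinate.
So the second coordinate is `n(z-1) + s` with `s ∈ [1, n]`, and uniqueness of Euclidean division
by `n` recovers `z` and `s`, hence `y`. Consecutive values inside a block come from neighbours in
the same column; across the boundary between blocks `z` and `z+1` the reversal of direction
makes them the same `y`, so they come from neighbours in adjacent layers.
-/

open Set

/-- The position of `y` in the column of layer `z`, which is traversed upwards iff `z` is odd. -/
def snake (n z y : ℤ) : ℤ := if Odd z then y else n + 1 - y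

def snakeFold (n : ℤ) (p : ℤ × ℤ) : ℤ := n * (p.2 - 1) + snake n p.2 p.1

theorem foldMap_eq_snakeFold (n : ℤ) (v : ℤ × ℤ × ℤ) :
    foldMap n v = (v.1, snakeFold n v.2) := by
  unfold foldMap snakeFold snake
  split_ifs
  · rfl
  · congr 1; ring

theorem rect3V_eq_prod (m n o : ℤ) : Rect3V m n o = Icc 1 m ×ˢ (Icc 1 n ×ˢ Icc 1 o) := by
  ext; simp only [mem_prod, mem_Icc, and_assoc]; rfl

theorem rectV_eq_prod (m n : ℤ) : RectV m n = Icc 1 m ×ˢ Icc 1 n := by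
  ext; simp only [mem_prod, mem_Icc, and_assoc]; rfl

theorem eq_and_eq_of_mul_add_eq_mul_add {n a b s t : ℤ} (hs : s ∈ Icc 1 n) (ht : t ∈ Icc 1 n)
    (h : n * a + s = n * b + t) : a = b ∧ s = t := by
  simp only [mem_Icc] at hs ht
  have hn : 0 < n := by omega
  obtain ⟨hqa, hra⟩ := (Int.ediv_emod_unique (a := n * a + s - 1) (q := a) (r := s - 1) hn).mpr
    ⟨by ring, by omega, by omega⟩
  obtain ⟨hqb, hrb⟩ := (Int.ediv_emod_unique (a := n * a + s - 1) (q := b) (r := t - 1) hn).mpr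
    ⟨by linear_combination -h, by omega, by omega⟩
  constructor <;> omega

section Snake

variable {n z y : ℤ}

theorem snake_snake : snake n z (snake n z y) = y := by
  unfold snake; split_ifs <;> ring

theorem snake_mem_Icc (hy : y ∈ Icc 1 n) : snake n z y ∈ Icc 1 n := by
  simp only [mem_Icc] at *; unfold snake; split_ifs <;> omega

theorem natAbs_snake_sub_snake (y' : ℤ) :
    (snake n z y - snake n z y').natAbs = (y - y').natAbs := by
  unfold snake; split_ifs <;> omega

theorem snake_succ_one : snake n (z + 1) 1 = snake n z n := by
  unfold snake
  by_cases hz : Odd z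
  · simp [hz, Int.not_odd_iff_even.mpr hz.add_one]
  · simp [hz, (Int.not_odd_iff_even.mp hz).add_one]

end Snake

section SnakeFold

variable {n o : ℤ}

theorem snakeFold_mapsTo : MapsTo (snakeFold n) (Icc 1 n ×ˢ Icc 1 o) (Icc 1 (n * o)) := by
  rintro ⟨y, z⟩ ⟨hy, hz⟩
  have hs := snake_mem_Icc (z := z) hy
  simp only [mem_Icc] at hy hz hs
  have h₀ : n ≤ n * z := le_mul_of_one_le_right (by omega) hz.1
  have h₁ : n * z ≤ n * o := mul_le_mul_of_nonneg_left hz.2 (by omega)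
  simp only [snakeFold, mem_Icc, mul_sub_one]
  omega

theorem snakeFold_injOn : InjOn (snakeFold n) (Icc 1 n ×ˢ univ) := by
  rintro ⟨y, z⟩ ⟨hy, -⟩ ⟨y', z'⟩ ⟨hy', -⟩ h
  obtain ⟨hz, hs⟩ := eq_and_eq_of_mul_add_eq_mul_add (snake_mem_Icc hy) (snake_mem_Icc hy') h
  obtain rfl : z = z' := by omega
  rw [← snake_snake (n := n) (z := z) (y := y), hs, snake_snake]

theorem snakeFold_surjOn (hn : 1 ≤ n) :
    SurjOn (snakeFold n) (Icc 1 n ×ˢ Icc 1 o) (Icc 1 (n * o)) := by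
  rintro b ⟨hb₁, hb₂⟩
  have hq₀ : 0 ≤ (b - 1) / n := Int.ediv_nonneg (by omega) (by omega)
  have hqo : (b - 1) / n < o :=
    (Int.ediv_lt_iff_lt_mul (by omega)).mpr (by linarith [mul_comm n o])
  have hr := Int.emod_lt_of_pos (b - 1) (by omega : 0 < n)
  have hr₀ := Int.emod_nonneg (b - 1) (by omega : n ≠ 0)
  have hdiv := Int.mul_ediv_add_emod (b - 1) n
  set z := (b - 1) / n + 1
  refine ⟨(snake n z ((b - 1) % n + 1), z),
    ⟨snake_mem_Icc ⟨by omega, by omega⟩, by omega, by omega⟩, ?_⟩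
  simp only [snakeFold, snake_snake, z, add_sub_cancel_right]
  omega

theorem snakeFold_bijOn (hn : 1 ≤ n) :
    BijOn (snakeFold n) (Icc 1 n ×ˢ Icc 1 o) (Icc 1 (n * o)) :=
  ⟨snakeFold_mapsTo, snakeFold_injOn.mono (prod_mono le_rfl (subset_univ _)), snakeFold_surjOn hn⟩

theorem gridAdj_of_snakeFold_add_one {p q : ℤ × ℤ} (hp : p.1 ∈ Icc 1 n) (hq : q.1 ∈ Icc 1 n)
    (h : snakeFold n p + 1 = snakeFold n q) : GridAdj p q := by
  obtain ⟨hsp₁, hsp₂⟩ := snake_mem_Icc (z := p.2) hp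
  have hsq := snake_mem_Icc (z := q.2) hq
  simp only [snakeFold] at h
  unfold GridAdj
  by_cases hlt : snake n p.2 p.1 < n
  · obtain ⟨hz, hs⟩ := eq_and_eq_of_mul_add_eq_mul_add (a := p.2 - 1) (b := q.2 - 1)
      (s := snake n p.2 p.1 + 1) ⟨by omega, by omega⟩ hsq (by linear_combination h)
    have hz : p.2 = q.2 := by omega
    have hy := natAbs_snake_sub_snake (n := n) (z := p.2) (y := p.1) q.1
    rw [hz] at hy hs
    omega
  · have hsn : snake n p.2 p.1 = n := by omega
    obtain ⟨hz, hs⟩ := eq_and_eq_of_mul_add_eq_mul_add (a := p.2) (b := q.2 - 1) (s := 1)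
      ⟨le_rfl, by omega⟩ hsq (by rw [hsn] at h; linear_combination h)
    have hz : q.2 = p.2 + 1 := by omega
    -- the column is reversed between layers `p.2` and `p.2 + 1`, so `q` sits right above `p`
    have hy : q.1 = p.1 :=
      calc q.1 = snake n q.2 (snake n q.2 q.1) := snake_snake.symm
        _ = snake n (p.2 + 1) 1 := by rw [← hs, hz]
        _ = snake n p.2 (snake n p.2 p.1) := by rw [snake_succ_one, hsn]
        _ = p.1 := snake_snake
    omega

theorem gridAdj_of_natAbs_snakeFold_sub_eq_one {p q : ℤ × ℤ} (hp : p.1 ∈ Icc 1 n)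
    (hq : q.1 ∈ Icc 1 n) (h : (snakeFold n p - snakeFold n q).natAbs = 1) : GridAdj p q := by
  obtain h | h : snakeFold n p + 1 = snakeFold n q ∨ snakeFold n q + 1 = snakeFold n p := by
    omega
  · exact gridAdj_of_snakeFold_add_one hp hq h
  · exact GridGraph.adj_symm (gridAdj_of_snakeFold_add_one hq hp h)

theorem grid3Adj_of_gridAdj_foldMap {u v : ℤ × ℤ × ℤ} (hu : u.2.1 ∈ Icc 1 n)
    (hv : v.2.1 ∈ Icc 1 n) (h : GridAdj (foldMap n u) (foldMap n v)) : Grid3Adj u v := by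
  obtain ⟨x, p⟩ := u
  obtain ⟨x', q⟩ := v
  rw [foldMap_eq_snakeFold, foldMap_eq_snakeFold] at h
  unfold GridAdj at h
  unfold Grid3Adj
  simp only at h hu hv ⊢
  obtain ⟨hx, hpq⟩ | ⟨rfl, hpq⟩ : (x - x').natAbs = 1 ∧ snakeFold n p = snakeFold n q ∨
      x = x' ∧ (snakeFold n p - snakeFold n q).natAbs = 1 := by
    omega
  · rw [snakeFold_injOn ⟨hu, trivial⟩ ⟨hv, trivial⟩ hpq]
    omega
  · have hpq := gridAdj_of_natAbs_snakeFold_sub_eq_one hu hv hpq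
    unfold GridAdj at hpq
    omega

end SnakeFold

theorem foldMap_spanning_subgraph_general (m n o : ℤ) (hn : 1 ≤ n) :
    Set.BijOn (foldMap n) (Rect3V m n o) (RectV m (n * o)) ∧
    (∀ u ∈ Rect3V m n o, ∀ v ∈ Rect3V m n o,
      GridAdj (foldMap n u) (foldMap n v) → Grid3Adj u v) := by
  refine ⟨?_, fun u hu v hv =>
    grid3Adj_of_gridAdj_foldMap ⟨hu.2.2.1, hu.2.2.2.1⟩ ⟨hv.2.2.1, hv.2.2.2.1⟩⟩
  rw [rect3V_eq_prod, rectV_eq_prod, funext (foldMap_eq_snakeFold n)]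
  exact (bijOn_id _).prodMap (snakeFold_bijOn hn)

/-- The map `F` (here `foldMap n`) restricts to a bijection from the
vertex set of the 3D grid graph `R(m,n,o)` onto the vertex set of the rectangular
grid graph `R(m, n·o)`, and whenever `F(u)` and `F(v)` are adjacent in `R(m,n·o)`,
the vertices `u` and `v` are adjacent in `R(m,n,o)`; hence `R(m,n,o)` contains a
spanning subgraph isomorphic to `R(m, n·o)`. -/
theorem foldMap_spanning_subgraph (m n o : ℤ) (hm : 1 ≤ m) (hn : 1 ≤ n) (ho : 1 ≤ o) :
    Set.BijOn (foldMap n) (Rect3V m n o) (RectV m (n * o)) ∧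
    (∀ u ∈ Rect3V m n o, ∀ v ∈ Rect3V m n o,
      GridAdj (foldMap n u) (foldMap n v) → Grid3Adj u v) :=
  foldMap_spanning_subgraph_general m n o hn
end
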